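/- arXiv:math/9912024 — 2 statements merged into one kernel-verified Lean document; each statement's English description precedes it below -/
import Mathlib

section
/- If α, β are complex numbers and P is a polynomial in two variables with cos(α t₁ + β t₂) = P(cos t₁, cos t₂) for all (t₁,t₂) ∈ ℂ², then α and β are integers and moreover α β = 0. -/
/-- If `cos (α t₁ + β t₂) = P (cos t₁, cos t₂)` identically on `ℂ²` for a
two-variable polynomial `P` and constants `α, β ∈ ℂ`, then `α` and `β` are
integers and `α β = 0`. -/
theorem cos_functional_equation (α β : ℂ) (P : MvPolynomial (Fin 2) ℂ)
    (h : ∀ t₁ t₂ : ℂ, Complex.cos (α * t₁ + β * t₂) =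
      MvPolynomial.eval ![Complex.cos t₁, Complex.cos t₂] P) :
    (∃ a : ℤ, α = a) ∧ (∃ b : ℤ, β = b) ∧ α * β = 0 := by
  have hπ : (2 * (Real.pi : ℂ)) ≠ 0 := by
    simp [Complex.ofReal_ne_zero, Real.pi_ne_zero]
  have e0 := h 0 0
  have eα := h (2 * Real.pi) 0
  have eβ := h 0 (2 * Real.pi)
  simp [Complex.cos_two_pi] at e0 eα eβ
  -- cos (α * 2π) = 1 and cos (β * 2π) = 1
  have hα1 : Complex.cos (α * (2 * Real.pi)) = 1 := by rw [eα, ← e0]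
  have hβ1 : Complex.cos (β * (2 * Real.pi)) = 1 := by rw [eβ, ← e0]
  obtain ⟨a, ha⟩ := Complex.cos_eq_one_iff.mp hα1
  obtain ⟨b, hb⟩ := Complex.cos_eq_one_iff.mp hβ1
  have haa : α = a := by
    have := mul_right_cancel₀ hπ (ha.trans rfl)
    exact this.symm
  have hbb : β = b := by
    have := mul_right_cancel₀ hπ (hb.trans rfl)
    exact this.symm
  refine ⟨⟨a, haa⟩, ⟨b, hbb⟩, ?_⟩
  -- product is zero
  by_cases hα0 : α = 0
  · simp [hα0]
  by_cases hβ0 : β = 0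
  · simp [hβ0]
  exfalso
  have hsin : ∀ t₁ t₂ : ℂ, Complex.sin (α * t₁) * Complex.sin (β * t₂) = 0 := by
    intro t₁ t₂
    have h2 := h (-t₁) t₂
    rw [Complex.cos_neg] at h2
    have h1 := (h t₁ t₂).trans h2.symm
    rw [mul_neg, Complex.cos_add, Complex.cos_add, Complex.cos_neg, Complex.sin_neg] at h1
    linear_combination -h1 / 2
  have := hsin (Real.pi / 2 / α) (Real.pi / 2 / β)
  rw [mul_div_cancel₀ _ hα0, mul_div_cancel₀ _ hβ0] at this
  simp [Complex.sin_pi_div_two] at this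
end

section
/- The polynomial x · T̃_{d²}(x) is not divisible by T̃_d'(T̃_d(x)) for d ≥ 2. -/
open Polynomial

private lemma T_deg_lc (n : ℕ) :
    (Chebyshev.T ℂ n).natDegree = n ∧ (Chebyshev.T ℂ n).leadingCoeff = 2 ^ (n - 1) := by
  induction n using Nat.strong_induction_on with
  | _ n ih =>
    match n with
    | 0 => simp [Chebyshev.T_zero]
    | 1 => simp [Chebyshev.T_one]
    | (m + 2) =>
      obtain ⟨hqd, -⟩ := ih m (by omega)
      obtain ⟨hpd, hpl⟩ := ih (m + 1) (by omega)
      have hp0 : Chebyshev.T ℂ ((m + 1 : ℕ) : ℤ) ≠ 0 :=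
        leadingCoeff_ne_zero.mp (by rw [hpl]; norm_num)
      have hT : Chebyshev.T ℂ ((m + 2 : ℕ) : ℤ) =
          2 * X * Chebyshev.T ℂ ((m + 1 : ℕ) : ℤ) - Chebyshev.T ℂ ((m : ℕ) : ℤ) := by
        have h := Chebyshev.T_add_two ℂ (m : ℤ)
        push_cast at h ⊢
        exact h
      have hC2 : (2 : ℂ[X]) = C 2 := (map_ofNat C 2).symm
      have h2Xd : (2 * X : ℂ[X]).natDegree = 1 := by
        rw [hC2]; exact natDegree_C_mul_X _ two_ne_zero
      have h2X : (2 * X : ℂ[X]) ≠ 0 := ne_zero_of_natDegree_gt (n := 0) (by omega)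
      have h2Xl : (2 * X : ℂ[X]).leadingCoeff = 2 := by
        rw [hC2, leadingCoeff_mul, leadingCoeff_C, leadingCoeff_X, mul_one]
      have hAd : (2 * X * Chebyshev.T ℂ ((m + 1 : ℕ) : ℤ)).natDegree = m + 2 := by
        rw [natDegree_mul h2X hp0, h2Xd, hpd]; omega
      have hAl : (2 * X * Chebyshev.T ℂ ((m + 1 : ℕ) : ℤ)).leadingCoeff = 2 ^ (m + 1) := by
        rw [leadingCoeff_mul, hpl, h2Xl]
        norm_num
        ring
      have hlt : (Chebyshev.T ℂ ((m : ℕ) : ℤ)).natDegree <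
          (2 * X * Chebyshev.T ℂ ((m + 1 : ℕ) : ℤ)).natDegree := by
        rw [hqd, hAd]; omega
      constructor
      · rw [hT, natDegree_sub_eq_left_of_natDegree_lt hlt, hAd]
      · rw [hT, leadingCoeff_sub_of_degree_lt (degree_lt_degree hlt), hAl]
        norm_num

/-- The normalized Chebyshev polynomial `T̃_d(x) := 2 T_d(x/2)`. -/
noncomputable def tildeT (d : ℕ) : Polynomial ℂ :=
  2 * (Chebyshev.T ℂ d).comp (Polynomial.C 2⁻¹ * Polynomial.X)

private lemma tildeT_natDegree (n : ℕ) : (tildeT n).natDegree = n := by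
  have hC2 : (2 : ℂ[X]) = C 2 := (map_ofNat C 2).symm
  rw [tildeT, hC2, natDegree_C_mul two_ne_zero, natDegree_comp,
    natDegree_C_mul_X _ (by norm_num), (T_deg_lc n).1, mul_one]

private lemma tildeT_comp (m k : ℕ) : (tildeT m).comp (tildeT k) = tildeT (m * k) := by
  have hC2 : (2 : ℂ[X]) = C 2 := (map_ofNat C 2).symm
  have h1 : (C (2⁻¹ : ℂ)) * tildeT k = (Chebyshev.T ℂ k).comp (C 2⁻¹ * X) := by
    rw [tildeT, hC2, ← mul_assoc, ← C_mul]
    norm_num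
  rw [tildeT, hC2, mul_comp, C_comp, comp_assoc, mul_comp, C_comp, X_comp, h1,
    ← comp_assoc, ← Chebyshev.T_mul, tildeT, hC2]
  push_cast
  ring

private lemma tildeT_eval (n : ℕ) (θ : ℂ) :
    (tildeT n).eval (2 * Complex.cos θ) = 2 * Complex.cos (n * θ) := by
  rw [tildeT]
  simp only [eval_mul, eval_comp, eval_C, eval_X, eval_ofNat]
  rw [show ((2⁻¹ : ℂ) * (2 * Complex.cos θ)) = Complex.cos θ by ring,
    Chebyshev.T_complex_cos]
  norm_num

private lemma tildeT_sep (n : ℕ) (hn : 1 ≤ n) : (tildeT n).Separable := by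
  classical
  have hdeg := tildeT_natDegree n
  have hp0 : tildeT n ≠ 0 := ne_zero_of_natDegree_gt (n := 0) (by omega)
  rw [← nodup_roots_iff_of_splits hp0 (IsAlgClosed.splits _)]
  set g : ℕ → ℂ := fun k => 2 * Complex.cos (((2 * k + 1) * Real.pi / (2 * n) : ℝ) : ℂ)
    with hg
  have hroot : ∀ k ∈ Finset.range n, g k ∈ (tildeT n).roots.toFinset := by
    intro k hk
    rw [Multiset.mem_toFinset, mem_roots hp0]
    show (tildeT n).eval _ = 0
    rw [hg]
    simp only
    rw [tildeT_eval]
    have h1 : (n : ℂ) * (((2 * k + 1) * Real.pi / (2 * n) : ℝ) : ℂ) =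
        (((2 * k + 1) * Real.pi / 2 : ℝ) : ℂ) := by
      have hn0 : (n : ℂ) ≠ 0 := Nat.cast_ne_zero.mpr (by omega)
      push_cast
      field_simp
    rw [h1, ← Complex.ofReal_cos]
    have h2 : Real.cos ((2 * k + 1) * Real.pi / 2) = 0 := by
      rw [Real.cos_eq_zero_iff]
      exact ⟨k, by push_cast; ring⟩
    rw [h2]
    norm_num
  have hinj : Set.InjOn g (Finset.range n) := by
    intro a ha b hb hab
    simp only [Finset.coe_range, Set.mem_Iio] at ha hb
    have hmem : ∀ c : ℕ, c < n → ((2 * c + 1) * Real.pi / (2 * n)) ∈ Set.Icc 0 Real.pi := by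
      intro c hc
      have hπ := Real.pi_pos
      constructor
      · positivity
      · rw [div_le_iff₀ (by positivity)]
        have h2c : (2 * (c : ℝ) + 1) ≤ 2 * n := by
          have : (c : ℝ) + 1 ≤ n := by exact_mod_cast hc
          linarith
        nlinarith
    have hcos : Real.cos ((2 * a + 1) * Real.pi / (2 * n)) =
        Real.cos ((2 * b + 1) * Real.pi / (2 * n)) := by
      rw [hg] at hab
      simp only at hab
      rw [← Complex.ofReal_cos, ← Complex.ofReal_cos] at hab
      have := mul_left_cancel₀ (two_ne_zero (α := ℂ)) hab
      exact_mod_cast this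
    have heq := Real.injOn_cos (hmem a ha) (hmem b hb) hcos
    have hπ : Real.pi ≠ 0 := Real.pi_ne_zero
    have hn0 : (n : ℝ) ≠ 0 := Nat.cast_ne_zero.mpr (by omega)
    field_simp at heq
    exact_mod_cast (show (a : ℝ) = b by linarith)
  have h1 : n ≤ (tildeT n).roots.toFinset.card := by
    simpa using Finset.card_le_card_of_injOn g hroot hinj
  have h2 : Multiset.card (tildeT n).roots ≤ n := le_of_le_of_eq (tildeT n).card_roots' hdeg
  have h3 : (tildeT n).roots.toFinset.card ≤ Multiset.card (tildeT n).roots :=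
    Multiset.toFinset_card_le _
  rw [← Multiset.toFinset_card_eq_card_iff_nodup]
  omega

/-- For `d ≥ 2`, the polynomial `x · T̃_{d²}(x)` is not divisible by `T̃_d'(T̃_d(x))`. -/
theorem not_dvd_X_mul_tildeT (d : ℕ) (hd : 2 ≤ d) :
    ¬ ((Polynomial.derivative (tildeT d)).comp (tildeT d) ∣
        Polynomial.X * tildeT (d ^ 2)) := by
  intro hdvd
  have hcomp : (tildeT d).comp (tildeT d) = tildeT (d ^ 2) := by
    rw [tildeT_comp, sq]
  have hder : (derivative (tildeT d)).comp (tildeT d) ∣ derivative (tildeT (d ^ 2)) := by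
    rw [← hcomp, derivative_comp]
    exact dvd_mul_left _ _
  have hsep : (tildeT (d ^ 2)).Separable := tildeT_sep _ (by nlinarith)
  have hcop : IsCoprime ((derivative (tildeT d)).comp (tildeT d)) (tildeT (d ^ 2)) :=
    (hsep.of_isCoprime_of_dvd_right hder).symm
  have hX : (derivative (tildeT d)).comp (tildeT d) ∣ X := by
    exact hcop.dvd_of_dvd_mul_right hdvd
  have hDdeg : (derivative (tildeT d)).natDegree = d - 1 := by
    have h0 : 0 < (tildeT d).natDegree := by rw [tildeT_natDegree]; omega
    have := degree_derivative_eq (tildeT d) h0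
    rw [tildeT_natDegree] at this
    exact natDegree_eq_of_degree_eq_some this
  have hadeg : ((derivative (tildeT d)).comp (tildeT d)).natDegree = (d - 1) * d := by
    rw [natDegree_comp, hDdeg, tildeT_natDegree]
  have hle : ((derivative (tildeT d)).comp (tildeT d)).natDegree ≤ 1 := by
    have := natDegree_le_of_dvd hX X_ne_zero
    simpa using this
  rw [hadeg] at hle
  have h12 : 1 * 2 ≤ (d - 1) * d := Nat.mul_le_mul (by omega) hd
  omega
end
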